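/- arXiv:2306.09964 — 3 statements merged into one kernel-verified Lean document; each statement's English description precedes it below -/
import Mathlib

section
/- In a symmetric binary-action base game, for any BCE p and any player i, the following are equivalent: (i) v̲_i(p) < v̄_i(p) (the uninformed value is strictly below the gross value); (ii) both actions of player i have positive probability under p and each recommended action is the unique best response to its conditional belief: for each a_i ∈ A_i, a_i ∈ supp_i(p) and BR(p_{a_i}) = {a_i}. -/
open Finset

section

variable {I : Type} [Fintype I] [DecidableEq I] {Θ : Type} [Fintype Θ]

/-- Marginal probability that player `i` plays `ai`. -/
noncomputable def marg (p : ((I → Bool) × Θ) → ℝ) (i : I) (ai : Bool) : ℝ :=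
  ∑ x : (I → Bool) × Θ, if x.1 i = ai then p x else 0

/-- Conditional belief of player `i` given recommendation `ai`, represented as
a function on profile-state pairs ignoring the `i`-th coordinate. -/
noncomputable def condBelief (p : ((I → Bool) × Θ) → ℝ) (i : I) (ai : Bool) :
    ((I → Bool) × Θ) → ℝ :=
  fun x => p (Function.update x.1 i ai, x.2) / marg p i ai

/-- Expected utility of playing `ci` against belief `μ`. -/
noncomputable def dev (u : ((I → Bool) × Θ) → ℝ) (i : I) (ci : Bool)
    (μ : ((I → Bool) × Θ) → ℝ) : ℝ :=
  ∑ x : (I → Bool) × Θ, u (Function.update x.1 i ci, x.2) * μ x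

/-- Best responses of player `i` to belief `μ`. -/
noncomputable def BRset (u : ((I → Bool) × Θ) → ℝ) (i : I)
    (μ : ((I → Bool) × Θ) → ℝ) : Set Bool :=
  {ci | ∀ di : Bool, dev u i di μ ≤ dev u i ci μ}

/-- Obedience (BCE) constraint. -/
def Obedient (u : I → ((I → Bool) × Θ) → ℝ) (p : ((I → Bool) × Θ) → ℝ) : Prop :=
  ∀ i : I, ∀ ai bi : Bool,
    0 ≤ ∑ x : (I → Bool) × Θ,
      (if x.1 i = ai then (u i x - u i (Function.update x.1 i bi, x.2)) * p x else 0)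

end


section aux
variable {I : Type} [Fintype I] [DecidableEq I] {Θ : Type} [Fintype Θ]

lemma splitSum' (i : I) (ai : Bool) (h : ((I → Bool) × Θ) → ℝ) :
    ∑ x : (I → Bool) × Θ, h x =
      (∑ x : (I → Bool) × Θ, if x.1 i = ai then h x else 0)
      + ∑ x : (I → Bool) × Θ, if x.1 i = ai then 0 else h x := by
  rw [← Finset.sum_add_distrib]
  apply Finset.sum_congr rfl
  intro x _
  by_cases hx : x.1 i = ai <;> simp [hx]

lemma flipSum' (i : I) (ai : Bool) (g : ((I → Bool) × Θ) → ℝ) :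
    ∑ x : (I → Bool) × Θ, (if x.1 i = ai then (0:ℝ) else g (Function.update x.1 i ai, x.2))
      = ∑ x : (I → Bool) × Θ, if x.1 i = ai then g x else 0 := by
  have hinv : Function.Involutive
      (fun x : (I → Bool) × Θ => (Function.update x.1 i (!(x.1 i)), x.2)) := by
    intro x
    simp [Function.update_idem, Bool.not_not, Function.update_eq_self, Prod.ext_iff]
  symm
  apply Fintype.sum_bijective _ hinv.bijective
  intro x
  simp only
  rw [Function.update_self, Function.update_idem]
  by_cases hx : x.1 i = ai
  · rw [if_pos hx, if_neg (by simp [hx]), ← hx, Function.update_eq_self]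
  · have : x.1 i = !ai := by cases ai <;> cases hb : x.1 i <;> simp_all
    rw [if_neg hx, if_pos (by simp [this])]

lemma keyDouble (i : I) (ai : Bool) (g : ((I → Bool) × Θ) → ℝ) :
    ∑ x : (I → Bool) × Θ, g (Function.update x.1 i ai, x.2)
      = 2 * ∑ x : (I → Bool) × Θ, (if x.1 i = ai then g x else 0) := by
  rw [splitSum' i ai (fun x => g (Function.update x.1 i ai, x.2))]
  rw [flipSum' i ai g]
  have : (∑ x : (I → Bool) × Θ, if x.1 i = ai then g (Function.update x.1 i ai, x.2) else 0)
      = ∑ x : (I → Bool) × Θ, if x.1 i = ai then g x else 0 := by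
    apply Finset.sum_congr rfl
    intro x _
    by_cases hx : x.1 i = ai
    · rw [if_pos hx, if_pos hx, ← hx, Function.update_eq_self]
    · rw [if_neg hx, if_neg hx]
  rw [this]; ring

end aux

/-- in a symmetric binary-action base game, for any BCE `p` and
player `i`, the uninformed value is strictly below the gross value iff both
actions of `i` have positive probability and each recommended action is the
unique best response to its conditional belief. -/
theorem stmt13 {I : Type} [Fintype I] [DecidableEq I] {Θ : Type} [Fintype Θ]
    (π : Θ → ℝ) (hπpos : ∀ θ, 0 < π θ) (hπ1 : ∑ θ, π θ = 1)
    (u : I → ((I → Bool) × Θ) → ℝ)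
    (hsym : ∀ (φ : Equiv.Perm I) (i : I) (a : I → Bool) (θ : Θ),
      u i (a ∘ φ, θ) = u (φ i) (a, θ))
    (p : ((I → Bool) × Θ) → ℝ)
    (hp0 : ∀ x, 0 ≤ p x) (hpπ : ∀ θ, ∑ a : I → Bool, p (a, θ) = π θ)
    (hp : Obedient u p) (i : I) :
    (max (∑ x : (I → Bool) × Θ, u i (Function.update x.1 i false, x.2) * p x)
         (∑ x : (I → Bool) × Θ, u i (Function.update x.1 i true, x.2) * p x)
       < ∑ x : (I → Bool) × Θ, u i x * p x) ↔
    (∀ ai : Bool, 0 < marg p i ai ∧ BRset (u i) i (condBelief p i ai) = {ai}) := by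
  classical
  set S : Bool → Bool → ℝ := fun ai ci =>
    ∑ x : (I → Bool) × Θ, if x.1 i = ai then u i (Function.update x.1 i ci, x.2) * p x else 0
    with hS
  -- deviation sums
  have hdevSum : ∀ ci : Bool,
      (∑ x : (I → Bool) × Θ, u i (Function.update x.1 i ci, x.2) * p x)
        = S false ci + S true ci := by
    intro ci
    rw [splitSum' i false (fun x => u i (Function.update x.1 i ci, x.2) * p x)]
    congr 1
    apply Finset.sum_congr rfl
    intro x _
    cases hx : x.1 i <;> simp [hx]
  -- gross value
  have hgross : (∑ x : (I → Bool) × Θ, u i x * p x) = S false false + S true true := by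
    rw [splitSum' i false (fun x => u i x * p x)]
    congr 1
    · apply Finset.sum_congr rfl
      intro x _
      by_cases hx : x.1 i = false
      · rw [if_pos hx, if_pos hx, ← hx, Function.update_eq_self]
      · rw [if_neg hx, if_neg hx]
    · apply Finset.sum_congr rfl
      intro x _
      by_cases hx : x.1 i = false
      · rw [if_pos hx, if_neg (by simp [hx])]
      · have ht : x.1 i = true := by cases hb : x.1 i <;> simp_all
        rw [if_neg hx, if_pos ht, ← ht, Function.update_eq_self]
  -- dev against conditional belief
  have hdev : ∀ ai ci : Bool,
      dev (u i) i ci (condBelief p i ai) = 2 * S ai ci / marg p i ai := by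
    intro ai ci
    have h1 : ∀ x : (I → Bool) × Θ,
        u i (Function.update x.1 i ci, x.2) * condBelief p i ai x
          = (fun y : (I → Bool) × Θ => u i (Function.update y.1 i ci, y.2) * p y)
              (Function.update x.1 i ai, x.2) / marg p i ai := by
      intro x
      simp only [condBelief, Function.update_idem]
      ring
    simp only [dev]
    rw [Finset.sum_congr rfl (fun x _ => h1 x), ← Finset.sum_div,
      keyDouble i ai (fun y => u i (Function.update y.1 i ci, y.2) * p y)]
  -- marg nonneg
  have hm0 : ∀ ai, 0 ≤ marg p i ai := by
    intro ai
    apply Finset.sum_nonneg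
    intro x _
    by_cases hx : x.1 i = ai <;> simp [marg, hx, hp0 x]
  -- marg zero kills S
  have hmz : ∀ ai ci, marg p i ai = 0 → S ai ci = 0 := by
    intro ai ci hz
    have hpz : ∀ x : (I → Bool) × Θ, x.1 i = ai → p x = 0 := by
      intro x hx
      have := (Finset.sum_eq_zero_iff_of_nonneg (fun y _ => by
        by_cases hy : y.1 i = ai <;> simp [hy, hp0 y])).mp hz x (Finset.mem_univ x)
      simpa [hx] using this
    apply Finset.sum_eq_zero
    intro x _
    by_cases hx : x.1 i = ai <;> simp [hx, hpz x]
  -- BR characterization given positive marginal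
  have hBR : ∀ ai : Bool, 0 < marg p i ai →
      (BRset (u i) i (condBelief p i ai) = {ai} ↔ S ai (!ai) < S ai ai) := by
    intro ai hmpos
    have hdlt : dev (u i) i (!ai) (condBelief p i ai) < dev (u i) i ai (condBelief p i ai)
        ↔ S ai (!ai) < S ai ai := by
      rw [hdev, hdev, div_lt_div_iff_of_pos_right hmpos]
      constructor <;> intro h <;> linarith
    constructor
    · intro hset
      rw [← hdlt]
      have h1 : ai ∈ BRset (u i) i (condBelief p i ai) := by rw [hset]; rfl
      have h2 : (!ai) ∉ BRset (u i) i (condBelief p i ai) := by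
        rw [hset]; simp
      simp only [BRset, Set.mem_setOf_eq, not_forall, not_le] at h2
      obtain ⟨di, hdi⟩ := h2
      cases ai <;> cases di <;> simp_all
    · intro hlt
      rw [← hdlt] at hlt
      ext ci
      simp only [BRset, Set.mem_setOf_eq, Set.mem_singleton_iff]
      constructor
      · intro hci
        by_contra hne
        have : ci = !ai := by cases ai <;> cases ci <;> simp_all
        rw [this] at hci
        exact absurd (hci ai) (not_le.mpr hlt)
      · intro hci di
        subst hci
        cases di with
        | false => cases ci with
          | false => exact le_refl _
          | true => exact le_of_lt (by simpa using hlt)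
        | true => cases ci with
          | false => exact le_of_lt (by simpa using hlt)
          | true => exact le_refl _
  -- main equivalence
  rw [hgross, hdevSum false, hdevSum true, max_lt_iff]
  constructor
  · rintro ⟨h1, h2⟩ ai
    have hkey : S ai (!ai) < S ai ai := by
      cases ai
      · simpa using (by linarith : S false true < S false false)
      · simpa using (by linarith : S true false < S true true)
    have hmpos : 0 < marg p i ai := by
      rcases lt_or_eq_of_le (hm0 ai) with h | h
      · exact h
      · exfalso
        rw [hmz ai (!ai) h.symm, hmz ai ai h.symm] at hkey
        exact lt_irrefl _ hkey
    exact ⟨hmpos, (hBR ai hmpos).mpr hkey⟩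
  · intro h
    obtain ⟨hmf, hBRf⟩ := h false
    obtain ⟨hmt, hBRt⟩ := h true
    have h1 : S false true < S false false := by simpa using (hBR false hmf).mp hBRf
    have h2 : S true false < S true true := by simpa using (hBR true hmt).mp hBRt
    constructor <;> linarith
end

section
/- In the regime change game, a symmetric outcome p* minimizes the utilitarian uninformed welfare w̲(p) over all symmetric outcomes p ∈ Δ^sy_π(A×Θ) if and only if: (1) p*({(a,θ) : θ−1 ≤ Σ_i a_i ≤ θ}) = 0 (no investor is ever pivotal), and (2) p*({(a,θ) : Σ_i a_i > θ}) = k/(1+x) (the attack succeeds with probability exactly k/(1+x)). -/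
/-!
Write `λ = k / (1 + x)`. Given an outcome, investor `i` who never attacks gets `-x A_i`, and one who
always attacks gets `A_i + B_i - k`, where `A_i` is the probability that the others alone make the
attack succeed and `B_i ≥ 0` the probability that `i` is pivotal. The two lines `-x A` and `A - k`
cross at `A = λ`, so each investor's uninformed payoff is at least `-x λ`, with equality iff
`A_i = λ` and `B_i = 0`. The bound `n · (-x λ)` is attained by the symmetric outcome in which, in
every state, either everybody attacks (with probability `λ`) or nobody does, since then nobody is
pivotal. Hence the minimisers are exactly the outcomes with `A_i = λ` and `B_i = 0` for all `i`,
and, since some investor is pivotal at every profile of the event `θ - 1 ≤ Σ a ≤ θ`, this means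
that event is null and the attack succeeds with probability `λ`.
-/

open Finset

/-- The number of attackers in an action profile. -/
def attackers {n : ℕ} (a : Fin n → Bool) : ℕ :=
  (univ.filter fun j => a j = true).card

/-- Payoffs in the regime change game with speculation cost `k` and
externality `x`: attacking (`true`) pays `1−k` if the attack succeeds
(at least `θv` attackers) and `−k` otherwise; not attacking pays `−x` if the
attack succeeds and `0` otherwise. -/
noncomputable def rcU {n : ℕ} (k x : ℝ) (i : Fin n) (a : Fin n → Bool)
    (θv : ℕ) : ℝ :=
  if a i = true then (if θv ≤ attackers a then 1 - k else -k)
  else (if θv ≤ attackers a then -x else 0)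

/-- `p` is an outcome with `Θ`-marginal `π`. -/
def IsOutcome {n : ℕ} {Θ : Type} [Fintype Θ] (π : Θ → ℝ)
    (p : ((Fin n → Bool) × Θ) → ℝ) : Prop :=
  (∀ y, 0 ≤ p y) ∧ ∀ θ, (∑ a : Fin n → Bool, p (a, θ)) = π θ

/-- A symmetric outcome: invariant under permutations of the players. -/
def SymmOutcome {n : ℕ} {Θ : Type} [Fintype Θ]
    (p : ((Fin n → Bool) × Θ) → ℝ) : Prop :=
  ∀ (φ : Equiv.Perm (Fin n)) (a : Fin n → Bool) (θ : Θ), p (a ∘ φ, θ) = p (a, θ)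

/-- Utilitarian uninformed welfare `w̲(p)` in the regime change game. -/
noncomputable def wundRC {n : ℕ} {Θ : Type} [Fintype Θ] (k x : ℝ)
    (val : Θ → ℕ) (p : ((Fin n → Bool) × Θ) → ℝ) : ℝ :=
  ∑ i : Fin n,
    max (∑ y : (Fin n → Bool) × Θ,
          rcU k x i (Function.update y.1 i false) (val y.2) * p y)
        (∑ y : (Fin n → Bool) × Θ,
          rcU k x i (Function.update y.1 i true) (val y.2) * p y)

section Probability

variable {α : Type*} [Fintype α]

def probOf (p : α → ℝ) (E : α → Prop) [DecidablePred E] : ℝ :=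
  ∑ y, if E y then p y else 0

variable {p : α → ℝ} {E E' : α → Prop} [DecidablePred E] [DecidablePred E']

lemma probOf_nonneg (hp : ∀ y, 0 ≤ p y) : 0 ≤ probOf p E :=
  sum_nonneg fun y _ => by split_ifs; exacts [hp y, le_rfl]

lemma probOf_eq_zero_iff (hp : ∀ y, 0 ≤ p y) : probOf p E = 0 ↔ ∀ y, E y → p y = 0 := by
  rw [probOf, Fintype.sum_eq_zero_iff_of_nonneg fun y => by split_ifs; exacts [hp y, le_rfl]]
  simp [funext_iff]

lemma probOf_congr (h : ∀ y, p y ≠ 0 → (E y ↔ E' y)) : probOf p E = probOf p E' :=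
  sum_congr rfl fun y _ => by
    by_cases hy : p y = 0
    · simp [hy]
    · simp only [h y hy]

end Probability

section Attackers

variable {n : ℕ}

def attackersExcept (a : Fin n → Bool) (i : Fin n) : ℕ :=
  attackers (Function.update a i false)

lemma attackers_update_add_toNat (a : Fin n → Bool) (i : Fin n) (b : Bool) :
    attackers (Function.update a i b) + (a i).toNat = attackers a + b.toNat := by
  simp only [attackers, card_filter]
  rw [Fintype.sum_eq_add_sum_compl i, Fintype.sum_eq_add_sum_compl i (fun j => if a j then 1 else 0),
    sum_congr rfl fun j hj => by rw [Function.update_of_ne (by simpa using hj)]]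
  cases a i <;> cases b <;> simp <;> omega

lemma attackers_eq_attackersExcept_add (a : Fin n → Bool) (i : Fin n) :
    attackers a = attackersExcept a i + (a i).toNat := by
  simpa [attackersExcept] using (attackers_update_add_toNat a i false).symm

lemma attackers_update_true (a : Fin n → Bool) (i : Fin n) :
    attackers (Function.update a i true) = attackersExcept a i + 1 := by
  have := attackers_update_add_toNat a i true
  rw [attackers_eq_attackersExcept_add a i] at this
  simp only [Bool.toNat_true] at this
  omega

@[simp]
lemma attackers_const (b : Bool) : attackers (fun _ : Fin n => b) = n * b.toNat := by
  cases b <;> simp [attackers]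

lemma exists_attackersExcept_eq_iff {a : Fin n → Bool} {v : ℕ} (hv : 1 ≤ v ∧ v ≤ n) :
    (∃ i, v = attackersExcept a i + 1) ↔ v ≤ attackers a + 1 ∧ attackers a ≤ v := by
  constructor
  · rintro ⟨i, rfl⟩
    have := attackers_eq_attackersExcept_add a i
    have := Bool.toNat_le (a i)
    omega
  rcases Nat.lt_or_ge (attackers a) v with hlt | hge <;> intro h
  · -- the attackers are one short of `v`, so any investor who does not attack is pivotal
    obtain ⟨i, -, hi⟩ := exists_mem_notMem_of_card_lt_card
      (s := univ.filter fun j => a j = true) (t := univ)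
      (by rw [card_univ, Fintype.card_fin]; exact show attackers a < n by omega)
    refine ⟨i, ?_⟩
    have := attackers_eq_attackersExcept_add a i
    rw [show a i = false by simpa using hi, Bool.toNat_false] at this
    omega
  · -- the attackers are exactly `v ≥ 1`, so any attacker is pivotal
    obtain ⟨i, hi⟩ : (univ.filter fun j => a j = true).Nonempty :=
      card_pos.mp (show 0 < attackers a by omega)
    refine ⟨i, ?_⟩
    have := attackers_eq_attackersExcept_add a i
    rw [(mem_filter.mp hi).2, Bool.toNat_true] at this
    omega

end Attackers

section Welfare

variable {n : ℕ} {Θ : Type} [Fintype Θ] {val : Θ → ℕ} {π : Θ → ℝ} {k x : ℝ}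
  {p : (Fin n → Bool) × Θ → ℝ}

def successWithoutProb (val : Θ → ℕ) (i : Fin n) (p : (Fin n → Bool) × Θ → ℝ) : ℝ :=
  probOf p fun y => val y.2 ≤ attackersExcept y.1 i

def pivotProb (val : Θ → ℕ) (i : Fin n) (p : (Fin n → Bool) × Θ → ℝ) : ℝ :=
  probOf p fun y => val y.2 = attackersExcept y.1 i + 1

def pivotalProb (val : Θ → ℕ) (p : (Fin n → Bool) × Θ → ℝ) : ℝ :=
  probOf p fun y => val y.2 ≤ attackers y.1 + 1 ∧ attackers y.1 ≤ val y.2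

def successProb (val : Θ → ℕ) (p : (Fin n → Bool) × Θ → ℝ) : ℝ :=
  probOf p fun y => val y.2 < attackers y.1

lemma IsOutcome.marginal_nonneg (hp : IsOutcome π p) (θ : Θ) : 0 ≤ π θ :=
  hp.2 θ ▸ sum_nonneg fun a _ => hp.1 (a, θ)

lemma IsOutcome.sum_eq_one (hp : IsOutcome π p) (hπ1 : ∑ θ, π θ = 1) : ∑ y, p y = 1 := by
  rw [Fintype.sum_prod_type, sum_comm]
  simp only [hp.2, hπ1]

lemma rcU_update_false (i : Fin n) (a : Fin n → Bool) (v : ℕ) :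
    rcU k x i (Function.update a i false) v = if v ≤ attackersExcept a i then -x else 0 := by
  simp only [rcU, Function.update_self, Bool.false_eq_true, if_false]
  rfl

lemma rcU_update_true (i : Fin n) (a : Fin n → Bool) (v : ℕ) :
    rcU k x i (Function.update a i true) v = if v ≤ attackersExcept a i + 1 then 1 - k else -k := by
  simp [rcU, attackers_update_true]

lemma wundRC_eq (hp : IsOutcome π p) (hπ1 : ∑ θ, π θ = 1) :
    wundRC k x val p = ∑ i, max (-x * successWithoutProb val i p)
      (successWithoutProb val i p + pivotProb val i p - k) := by
  refine sum_congr rfl fun i _ => ?_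
  congr 1
  · rw [successWithoutProb, probOf, mul_sum]
    refine sum_congr rfl fun y _ => ?_
    rw [rcU_update_false]
    split_ifs <;> ring
  · have hpayoff : ∀ y, rcU k x i (Function.update y.1 i true) (val y.2) * p y =
        (if val y.2 ≤ attackersExcept y.1 i then p y else 0) +
          (if val y.2 = attackersExcept y.1 i + 1 then p y else 0) - k * p y := by
      intro y
      rw [rcU_update_true]
      split_ifs <;> first | omega | ring
    rw [sum_congr rfl fun y _ => hpayoff y, sum_sub_distrib, sum_add_distrib, ← mul_sum,
      hp.sum_eq_one hπ1, mul_one]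
    rfl

lemma neg_mul_div_le_max (hx : 0 < x) {A B : ℝ} (hB : 0 ≤ B) :
    -x * (k / (1 + x)) ≤ max (-x * A) (A + B - k) := by
  have h1x : 0 < 1 + x := by linarith
  rcases le_total A (k / (1 + x)) with h | h
  · exact le_max_of_le_left (by nlinarith)
  · refine le_max_of_le_right ?_
    have : k / (1 + x) - k = -x * (k / (1 + x)) := by field_simp; ring
    linarith

lemma max_eq_neg_mul_div_iff (hx : 0 < x) {A B : ℝ} (hB : 0 ≤ B) :
    -x * (k / (1 + x)) = max (-x * A) (A + B - k) ↔ A = k / (1 + x) ∧ B = 0 := by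
  have hcross : k / (1 + x) - k = -x * (k / (1 + x)) := by field_simp; ring
  constructor
  · intro h
    have h1 : -x * A ≤ -x * (k / (1 + x)) := h ▸ le_max_left _ _
    have h2 : A + B - k ≤ -x * (k / (1 + x)) := h ▸ le_max_right _ _
    have hA : k / (1 + x) ≤ A := le_of_mul_le_mul_left (by linarith) hx
    constructor <;> linarith
  · rintro ⟨rfl, rfl⟩
    rw [add_zero, hcross, max_self]

lemma pivotProb_nonneg (hp : IsOutcome π p) (i : Fin n) : 0 ≤ pivotProb val i p :=
  probOf_nonneg hp.1

lemma card_mul_le_wundRC (hp : IsOutcome π p) (hπ1 : ∑ θ, π θ = 1) (hx : 0 < x) :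
    n * (-x * (k / (1 + x))) ≤ wundRC k x val p := by
  rw [wundRC_eq hp hπ1]
  calc (n : ℝ) * (-x * (k / (1 + x))) = ∑ _i : Fin n, -x * (k / (1 + x)) := by simp
    _ ≤ _ := sum_le_sum fun i _ => neg_mul_div_le_max hx (pivotProb_nonneg hp i)

lemma forall_pivotProb_eq_zero_iff (hp : IsOutcome π p) (hval : ∀ θ, 1 ≤ val θ ∧ val θ ≤ n) :
    (∀ i, pivotProb val i p = 0) ↔ pivotalProb val p = 0 := by
  simp only [pivotProb, pivotalProb, probOf_eq_zero_iff hp.1,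
    ← exists_attackersExcept_eq_iff (hval _)]
  exact ⟨fun h y ⟨i, hi⟩ => h i y hi, fun h i y hi => h y ⟨i, hi⟩⟩

lemma successWithoutProb_eq_successProb (hpiv : pivotalProb val p = 0) (hp : IsOutcome π p)
    (i : Fin n) : successWithoutProb val i p = successProb val p := by
  refine probOf_congr fun y hy => ?_
  have hnot := mt ((probOf_eq_zero_iff hp.1).mp hpiv y) hy
  have := attackers_eq_attackersExcept_add y.1 i
  have := Bool.toNat_le (y.1 i)
  omega

lemma wundRC_eq_iff (hp : IsOutcome π p) (hπ1 : ∑ θ, π θ = 1) (hx : 0 < x) (hn : 0 < n)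
    (hval : ∀ θ, 1 ≤ val θ ∧ val θ ≤ n) :
    wundRC k x val p = n * (-x * (k / (1 + x))) ↔
      pivotalProb val p = 0 ∧ successProb val p = k / (1 + x) := by
  have hle : ∀ i ∈ univ, -x * (k / (1 + x)) ≤ max (-x * successWithoutProb val i p)
      (successWithoutProb val i p + pivotProb val i p - k) :=
    fun i _ => neg_mul_div_le_max hx (pivotProb_nonneg hp i)
  rw [wundRC_eq hp hπ1, eq_comm, show (n : ℝ) * (-x * (k / (1 + x))) =
      ∑ _i : Fin n, -x * (k / (1 + x)) by simp, sum_eq_sum_iff_of_le hle]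
  simp only [mem_univ, true_implies, max_eq_neg_mul_div_iff hx (pivotProb_nonneg hp _), forall_and,
    forall_pivotProb_eq_zero_iff hp hval]
  constructor
  · rintro ⟨hsucc, hpiv⟩
    exact ⟨hpiv, successWithoutProb_eq_successProb hpiv hp ⟨0, hn⟩ ▸ hsucc ⟨0, hn⟩⟩
  · rintro ⟨hpiv, hsucc⟩
    exact ⟨fun i => successWithoutProb_eq_successProb hpiv hp i ▸ hsucc, hpiv⟩

end Welfare

section AllOrNothing

variable {n : ℕ} {Θ : Type} {val : Θ → ℕ} {π : Θ → ℝ} {lam : ℝ}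

lemma const_true_ne_const_false (hn : 0 < n) : (fun _ : Fin n => true) ≠ fun _ => false :=
  fun h => by simpa using congrFun h ⟨0, hn⟩

def allOrNothing (lam : ℝ) (π : Θ → ℝ) (y : (Fin n → Bool) × Θ) : ℝ :=
  π y.2 * (if y.1 = (fun _ => true) then lam else if y.1 = (fun _ => false) then 1 - lam else 0)

lemma allOrNothing_ne_zero {y : (Fin n → Bool) × Θ} (hy : allOrNothing lam π y ≠ 0) :
    y.1 = (fun _ => true) ∨ y.1 = (fun _ => false) := by
  unfold allOrNothing at hy
  split_ifs at hy with h1 h2 <;> simp_all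

variable [Fintype Θ]

lemma isOutcome_allOrNothing (hn : 0 < n) (hlam : 0 ≤ lam ∧ lam ≤ 1) (hπ : ∀ θ, 0 ≤ π θ) :
    IsOutcome π (allOrNothing (n := n) lam π) := by
  have hne := const_true_ne_const_false hn
  refine ⟨fun y => mul_nonneg (hπ y.2) ?_, fun θ => ?_⟩
  · split_ifs <;> linarith
  · rw [Fintype.sum_eq_add _ _ hne fun a ha => by simp [allOrNothing, ha.1, ha.2]]
    simp [allOrNothing, hne.symm]
    ring

lemma symmOutcome_allOrNothing : SymmOutcome (allOrNothing (n := n) lam π) := by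
  intro φ a θ
  have hconst : ∀ b : Bool, (a ∘ φ = fun _ => b) ↔ a = fun _ => b := fun b => by
    simp only [funext_iff, Function.comp_apply]
    exact (φ.surjective.forall (p := fun j => a j = b)).symm
  simp only [allOrNothing, hconst]

lemma pivotalProb_allOrNothing (hval : ∀ θ, 2 ≤ val θ ∧ val θ < n) :
    pivotalProb val (allOrNothing (n := n) lam π) = 0 := by
  rw [pivotalProb, probOf_congr (E' := fun _ => False) fun y hy => ?_]
  · simp [probOf]
  · have := hval y.2
    rcases allOrNothing_ne_zero hy with h | h <;> simp [h] <;> omega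

lemma successProb_allOrNothing (hval : ∀ θ, 2 ≤ val θ ∧ val θ < n) (hπ1 : ∑ θ, π θ = 1) :
    successProb val (allOrNothing (n := n) lam π) = lam := by
  rw [successProb, probOf_congr (E' := fun y => y.1 = fun _ => true) fun y hy => ?_]
  · simp [probOf, allOrNothing, Fintype.sum_prod_type, ← sum_mul, hπ1]
  · have hv := hval y.2
    rcases allOrNothing_ne_zero hy with h | h
    · simpa [h] using hv.2
    · simpa [h] using (const_true_ne_const_false (by omega : 0 < n)).symm

end AllOrNothing

theorem stmt14_general (n : ℕ) (hn : 4 ≤ n) {Θ : Type} [Fintype Θ]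
    (val : Θ → ℕ)
    (hval : ∀ θ, 2 ≤ val θ ∧ val θ + 1 < n)
    (π : Θ → ℝ) (hπ1 : ∑ θ, π θ = 1)
    (k x : ℝ) (hk0 : 0 < k) (hk1 : k < 1) (hx : 0 < x)
    (pstar : ((Fin n → Bool) × Θ) → ℝ)
    (hpstar : IsOutcome π pstar) :
    (∀ p : ((Fin n → Bool) × Θ) → ℝ, IsOutcome π p → SymmOutcome p →
        wundRC k x val pstar ≤ wundRC k x val p) ↔
    ((∑ y : (Fin n → Bool) × Θ,
        if val y.2 ≤ attackers y.1 + 1 ∧ attackers y.1 ≤ val y.2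
        then pstar y else 0) = 0 ∧
     (∑ y : (Fin n → Bool) × Θ,
        if val y.2 < attackers y.1 then pstar y else 0) = k / (1 + x)) := by
  have hval₁ : ∀ θ, 1 ≤ val θ ∧ val θ ≤ n := fun θ => (hval θ).imp (by omega) (by omega)
  have hval₂ : ∀ θ, 2 ≤ val θ ∧ val θ < n := fun θ => (hval θ).imp (by omega) (by omega)
  have hlam : 0 ≤ k / (1 + x) ∧ k / (1 + x) ≤ 1 :=
    ⟨by positivity, (div_le_one (by linarith)).mpr (by linarith)⟩
  have hq := isOutcome_allOrNothing (n := n) (by omega) hlam hpstar.marginal_nonneg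
  have hq_min : wundRC k x val (allOrNothing (n := n) (k / (1 + x)) π) =
      n * (-x * (k / (1 + x))) := (wundRC_eq_iff hq hπ1 hx (by omega) hval₁).mpr
    ⟨pivotalProb_allOrNothing hval₂, successProb_allOrNothing hval₂ hπ1⟩
  refine Iff.trans ?_ (wundRC_eq_iff hpstar hπ1 hx (by omega) hval₁)
  constructor
  · intro hmin
    exact le_antisymm (hq_min ▸ hmin _ hq symmOutcome_allOrNothing)
      (card_mul_le_wundRC hpstar hπ1 hx)
  · intro h p hp _
    exact h ▸ card_mul_le_wundRC hp hπ1 hx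

/-- in the regime change game, a symmetric outcome `p*`
minimizes the utilitarian uninformed welfare over all symmetric outcomes iff
(1) no investor is ever pivotal (the event `θ−1 ≤ Σ_i a_i ≤ θ` has
probability zero) and (2) the attack succeeds (`Σ_i a_i > θ` — recall that if
nobody is pivotal, success `Σ_i a_i ≥ θ` means strict excess) with probability
exactly `k/(1+x)`. -/
theorem stmt14 (n : ℕ) (hn : 4 ≤ n) {Θ : Type} [Fintype Θ]
    (val : Θ → ℕ) (hvalinj : Function.Injective val)
    (hval : ∀ θ, 2 ≤ val θ ∧ val θ + 1 < n)
    (π : Θ → ℝ) (hπpos : ∀ θ, 0 < π θ) (hπ1 : ∑ θ, π θ = 1)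
    (k x : ℝ) (hk0 : 0 < k) (hk1 : k < 1) (hx : 0 < x)
    (pstar : ((Fin n → Bool) × Θ) → ℝ)
    (hpstar : IsOutcome π pstar) (hpsym : SymmOutcome pstar) :
    (∀ p : ((Fin n → Bool) × Θ) → ℝ, IsOutcome π p → SymmOutcome p →
        wundRC k x val pstar ≤ wundRC k x val p) ↔
    ((∑ y : (Fin n → Bool) × Θ,
        if val y.2 ≤ attackers y.1 + 1 ∧ attackers y.1 ≤ val y.2
        then pstar y else 0) = 0 ∧
     (∑ y : (Fin n → Bool) × Θ,
        if val y.2 < attackers y.1 then pstar y else 0) = k / (1 + x)) :=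
  stmt14_general n hn val hval π hπ1 k x hk0 hk1 hx pstar hpstar
end

section
/- In the regime change game, for any outcome p ∈ Δ_π(A×Θ), the following conditions are equivalent: (i) for all players i and states θ, p(Σ_{j≠i} a_j = θ−1) = 0 and p(Σ_{j≠i} a_j ≥ θ) = k/(1+x); (ii) for all states θ, p(θ−1 ≤ Σ_i a_i ≤ θ) = 0 and p(Σ_i a_i > θ) = k/(1+x). -/
open Finset

/-- The number of attackers other than player `i`. -/
def attackersEx {n : ℕ} (i : Fin n) (a : Fin n → Bool) : ℕ :=
  ((univ.erase i).filter fun j => a j = true).card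

lemma attackers_le_n {n : ℕ} (a : Fin n → Bool) : attackers a ≤ n := by
  classical
  calc (univ.filter fun j => a j = true).card ≤ (univ : Finset (Fin n)).card :=
        card_filter_le _ _
    _ = n := by simp

lemma attackersEx_true {n : ℕ} (i : Fin n) (a : Fin n → Bool) (h : a i = true) :
    attackersEx i a + 1 = attackers a := by
  classical
  unfold attackers attackersEx
  rw [← Finset.insert_erase (mem_univ i), filter_insert, if_pos h,
    card_insert_of_notMem (by simp), Finset.erase_insert (notMem_erase i univ)]

lemma attackersEx_false {n : ℕ} (i : Fin n) (a : Fin n → Bool) (h : a i = false) :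
    attackersEx i a = attackers a := by
  classical
  unfold attackers attackersEx
  rw [← Finset.insert_erase (mem_univ i), filter_insert, if_neg (by simp [h]),
    Finset.erase_insert (notMem_erase i univ)]

lemma exists_true_of_pos {n : ℕ} (a : Fin n → Bool) (h : 0 < attackers a) :
    ∃ i, a i = true := by
  classical
  obtain ⟨i, hi⟩ := card_pos.mp h
  exact ⟨i, (mem_filter.mp hi).2⟩

lemma exists_false_of_lt {n : ℕ} (a : Fin n → Bool) (h : attackers a < n) :
    ∃ i, a i = false := by
  classical
  by_contra hc
  push_neg at hc
  have : ∀ i, a i = true := fun i => by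
    cases hh : a i with
    | false => exact absurd hh (hc i)
    | true => rfl
  have : attackers a = n := by
    unfold attackers
    rw [filter_true_of_mem (fun i _ => this i)]
    simp
  omega

/-- in the regime change game, for any outcome `p`, the
per-player conditions (for all `i`: `p(Σ_{j≠i} a_j = θ−1) = 0` and
`p(Σ_{j≠i} a_j ≥ θ) = k/(1+x)`) are equivalent to the aggregate conditions
(`p(θ−1 ≤ Σ_i a_i ≤ θ) = 0` and `p(Σ_i a_i > θ) = k/(1+x)`). -/
theorem stmt15 (n : ℕ) (hn : 4 ≤ n) {Θ : Type} [Fintype Θ]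
    (val : Θ → ℕ) (hvalinj : Function.Injective val)
    (hval : ∀ θ, 2 ≤ val θ ∧ val θ + 1 < n)
    (π : Θ → ℝ) (hπpos : ∀ θ, 0 < π θ) (hπ1 : ∑ θ, π θ = 1)
    (k x : ℝ) (hk0 : 0 < k) (hk1 : k < 1) (hx : 0 < x)
    (p : ((Fin n → Bool) × Θ) → ℝ) (hp : IsOutcome π p) :
    (∀ i : Fin n,
      (∑ y : (Fin n → Bool) × Θ,
          if attackersEx i y.1 + 1 = val y.2 then p y else 0) = 0 ∧
      (∑ y : (Fin n → Bool) × Θ,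
          if val y.2 ≤ attackersEx i y.1 then p y else 0) = k / (1 + x)) ↔
    ((∑ y : (Fin n → Bool) × Θ,
        if val y.2 ≤ attackers y.1 + 1 ∧ attackers y.1 ≤ val y.2
        then p y else 0) = 0 ∧
     (∑ y : (Fin n → Bool) × Θ,
        if val y.2 < attackers y.1 then p y else 0) = k / (1 + x)) := by
  classical
  obtain ⟨hp0, hpm⟩ := hp
  have hnn : ∀ (P : ((Fin n → Bool) × Θ) → Prop) [DecidablePred P],
      ∀ z ∈ (univ : Finset ((Fin n → Bool) × Θ)), 0 ≤ if P z then p z else 0 := by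
    intro P _ z _
    split
    · exact hp0 z
    · exact le_rfl
  -- given pointwise vanishing on the band, the tail sums agree
  have key2 : (∀ y : (Fin n → Bool) × Θ,
        val y.2 ≤ attackers y.1 + 1 ∧ attackers y.1 ≤ val y.2 → p y = 0) →
      ∀ i : Fin n,
      (∑ y : (Fin n → Bool) × Θ, if val y.2 ≤ attackersEx i y.1 then p y else 0)
        = ∑ y : (Fin n → Bool) × Θ, if val y.2 < attackers y.1 then p y else 0 := by
    intro hz i
    refine Finset.sum_congr rfl fun y _ => ?_
    cases hy : y.1 i with
    | false =>
      have he := attackersEx_false i y.1 hy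
      by_cases h1 : val y.2 ≤ attackersEx i y.1
      · by_cases h2 : val y.2 < attackers y.1
        · rw [if_pos h1, if_pos h2]
        · rw [if_pos h1, if_neg h2, hz y ⟨by omega, by omega⟩]
      · rw [if_neg h1, if_neg (by omega)]
    | true =>
      have he := attackersEx_true i y.1 hy
      by_cases h1 : val y.2 ≤ attackersEx i y.1
      · rw [if_pos h1, if_pos (by omega)]
      · rw [if_neg h1, if_neg (by omega)]
  -- given pointwise vanishing on the band, each per-player first sum vanishes
  have key1 : (∀ y : (Fin n → Bool) × Θ,
        val y.2 ≤ attackers y.1 + 1 ∧ attackers y.1 ≤ val y.2 → p y = 0) →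
      ∀ i : Fin n,
      (∑ y : (Fin n → Bool) × Θ,
        if attackersEx i y.1 + 1 = val y.2 then p y else 0) = 0 := by
    intro hz i
    refine Finset.sum_eq_zero fun y _ => ?_
    by_cases hc : attackersEx i y.1 + 1 = val y.2
    · rw [if_pos hc]
      cases hy : y.1 i with
      | false =>
        have he := attackersEx_false i y.1 hy
        exact hz y ⟨by omega, by omega⟩
      | true =>
        have he := attackersEx_true i y.1 hy
        exact hz y ⟨by omega, by omega⟩
    · rw [if_neg hc]
  constructor
  · rintro h
    -- derive pointwise vanishing on the band from the per-player conditions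
    have hz : ∀ y : (Fin n → Bool) × Θ,
        val y.2 ≤ attackers y.1 + 1 ∧ attackers y.1 ≤ val y.2 → p y = 0 := by
      intro y hy
      obtain ⟨h1, h2⟩ := hy
      obtain ⟨hθ2, hθn⟩ := hval y.2
      by_cases hA : val y.2 ≤ attackers y.1
      · obtain ⟨i, hi⟩ := exists_true_of_pos y.1 (by omega)
        have he := attackersEx_true i y.1 hi
        have h0 := (Finset.sum_eq_zero_iff_of_nonneg (hnn _)).mp (h i).1 y (mem_univ y)
        rwa [if_pos (by omega)] at h0
      · obtain ⟨i, hi⟩ := exists_false_of_lt y.1 (by omega)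
        have he := attackersEx_false i y.1 hi
        have h0 := (Finset.sum_eq_zero_iff_of_nonneg (hnn _)).mp (h i).1 y (mem_univ y)
        rwa [if_pos (by omega)] at h0
    refine ⟨Finset.sum_eq_zero fun y _ => ?_, ?_⟩
    · by_cases hc : val y.2 ≤ attackers y.1 + 1 ∧ attackers y.1 ≤ val y.2
      · rw [if_pos hc, hz y hc]
      · rw [if_neg hc]
    · rw [← key2 hz ⟨0, by omega⟩]
      exact (h ⟨0, by omega⟩).2
  · rintro ⟨h1, h2⟩ i
    have hz : ∀ y : (Fin n → Bool) × Θ,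
        val y.2 ≤ attackers y.1 + 1 ∧ attackers y.1 ≤ val y.2 → p y = 0 := by
      intro y hy
      have h0 := (Finset.sum_eq_zero_iff_of_nonneg (hnn _)).mp h1 y (mem_univ y)
      rwa [if_pos hy] at h0
    exact ⟨key1 hz i, (key2 hz i).trans h2⟩
end
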